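/- Let μ be a probability measure on [0,∞) with mean 1 (the law of a unit-mean service time S with F_S(0) = 0), and let κ > 0. Then the Laplace transform satisfies 𝔼_μ[e^{−κS}] ≥ e^{−κ}, with the deterministic service time S ≡ 1 achieving equality. Consequently, for every arrival rate λ ∈ (0,1), the M/GI/1 erasure queue-channel capacity satisfies λ(1 − λ)κ/(κ − λ(1 − 𝔼_μ[e^{−κS}])) ≤ λ(1 − λ)κ/(κ − λ(1 − e^{−κ})); that is, among all service distributions with unit mean, the deterministic service time maximizes the capacity. -/

import Mathlib

open MeasureTheory

/-! By Jensen's inequality for the convex function `exp`, the Laplace transform of a law with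
mean `1` is at least `e^{−κ}`, the value attained by the point mass at `1`. The capacity
`λ(1−λ)κ/(κ − λ(1 − L))` is decreasing in the Laplace transform `L` as long as its denominator
stays positive, which `e^{−κ} > 1 − κ` guarantees. -/

/-- `L` stands for the Laplace transform `𝔼[e^{−κS}]` of the service time. -/
noncomputable def erasureCapacity (lam κ L : ℝ) : ℝ :=
  lam * (1 - lam) * κ / (κ - lam * (1 - L))

theorem erasureCapacity_antitone {lam κ L L' : ℝ} (hlam₀ : 0 ≤ lam) (hlam₁ : lam ≤ 1)
    (hκ : 0 < κ) (hL : 1 - κ < L) (hLL' : L ≤ L') :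
    erasureCapacity lam κ L' ≤ erasureCapacity lam κ L := by
  have hden : 0 < κ - lam * (1 - L) := by
    rcases le_total L 1 with hL1 | hL1
    · nlinarith [mul_le_mul_of_nonneg_right hlam₁ (sub_nonneg.mpr hL1)]
    · nlinarith [mul_nonpos_of_nonneg_of_nonpos hlam₀ (sub_nonpos.mpr hL1)]
  exact div_le_div_of_nonneg_left (by positivity) hden (by nlinarith)

theorem integrable_exp_neg_mul_of_nonneg {μ : Measure ℝ} [IsFiniteMeasure μ]
    (hsupp : ∀ᵐ x ∂μ, 0 ≤ x) {κ : ℝ} (hκ : 0 ≤ κ) :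
    Integrable (fun x => Real.exp (-κ * x)) μ := by
  refine Integrable.mono' (integrable_const 1) (by fun_prop) ?_
  filter_upwards [hsupp] with x hx
  rw [Real.norm_of_nonneg (Real.exp_pos _).le, Real.exp_le_one_iff]
  nlinarith

theorem exp_neg_mul_integral_le_integral_exp_neg_mul {μ : Measure ℝ} [IsProbabilityMeasure μ]
    (hint : Integrable (fun x => x) μ) {κ : ℝ}
    (hexp : Integrable (fun x => Real.exp (-κ * x)) μ) :
    Real.exp (-κ * ∫ x, x ∂μ) ≤ ∫ x, Real.exp (-κ * x) ∂μ := by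
  rw [← integral_const_mul]
  exact convexOn_exp.map_integral_le Real.continuous_exp.continuousOn isClosed_univ
    (by simp) (hint.const_mul (-κ)) hexp

/-- For a unit-mean service time distribution `μ` on `[0,∞)` and decoherence rate `κ > 0`,
the Laplace transform satisfies `𝔼_μ[e^{−κS}] ≥ e^{−κ}`, with equality for the
deterministic unit service time (the Dirac measure at `1`). Consequently, for every
arrival rate `λ ∈ (0,1)`, the M/GI/1 erasure queue-channel capacity
`λ(1−λ)κ/(κ − λ(1 − 𝔼_μ[e^{−κS}]))` is at most the capacity with deterministic service,
`λ(1−λ)κ/(κ − λ(1 − e^{−κ}))`. -/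
theorem deterministic_service_maximizes_capacity
    (μ : Measure ℝ) [IsProbabilityMeasure μ]
    (hsupp : ∀ᵐ x ∂μ, 0 ≤ x)
    (hmean : (∫ x, x ∂μ) = 1) (hint : Integrable (fun x => x) μ)
    (κ : ℝ) (hκ : 0 < κ) :
    (∫ x, Real.exp (-κ * x) ∂μ) ≥ Real.exp (-κ) ∧
    (∫ x, Real.exp (-κ * x) ∂(Measure.dirac (1 : ℝ))) = Real.exp (-κ) ∧
    ∀ lam ∈ Set.Ioo (0 : ℝ) 1,
      lam * (1 - lam) * κ / (κ - lam * (1 - ∫ x, Real.exp (-κ * x) ∂μ)) ≤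
        lam * (1 - lam) * κ / (κ - lam * (1 - Real.exp (-κ))) := by
  have hjensen : Real.exp (-κ) ≤ ∫ x, Real.exp (-κ * x) ∂μ := by
    simpa [hmean] using exp_neg_mul_integral_le_integral_exp_neg_mul hint
      (integrable_exp_neg_mul_of_nonneg hsupp hκ.le)
  have hexp_gt : 1 - κ < Real.exp (-κ) := by
    linarith [Real.add_one_lt_exp (neg_ne_zero.mpr hκ.ne')]
  refine ⟨hjensen, by simp, fun lam hlam => ?_⟩
  exact erasureCapacity_antitone hlam.1.le hlam.2.le hκ hexp_gt hjensen
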